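/- For every real r ≥ 1, the constants γ̄_{h^{(r)}} satisfy γ̄_{h^{(r)}} ≥ γ̄_{h^{(r+1)}}; that is, the map r ↦ γ̄_{h^{(r)}} is non-increasing on [1, ∞). -/

import Mathlib

open MeasureTheory Filter Topology

/-- The digamma function `ψ(x) = Γ'(x)/Γ(x)`. -/
noncomputable def digamma (x : ℝ) : ℝ := deriv Real.Gamma x / Real.Gamma x

/-- The rising factorial `x^{r̄} = Γ(x+r)/Γ(x)`. -/
noncomputable def rise (x r : ℝ) : ℝ := Real.Gamma (x + r) / Real.Gamma x

/-- The analytic extension of the hyperharmonic numbers: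
`h_x^{(r)} = (x^{r̄}/(x Γ(r)))(ψ(x+r) − ψ(r))` for `r > 0`, and `h_x^{(0)} = 1/x`. -/
noncomputable def hyp (r x : ℝ) : ℝ :=
  if r = 0 then 1 / x
  else rise x r / (x * Real.Gamma r) * (digamma (x + r) - digamma r)

/-- `y_n(r) = ∑_{k=1}^n h_k^{(r)}/k^r − ∫_1^n h_x^{(r)}/x^r dx`. -/
noncomputable def yseq (r : ℝ) (n : ℕ) : ℝ :=
  ∑ k ∈ Finset.Icc 1 n, hyp r k / (k : ℝ) ^ r - ∫ x in (1:ℝ)..(n:ℝ), hyp r x / x ^ r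

/-- `z_n(r) = ∑_{k=1}^{n-1} h_k^{(r)}/k^r − ∫_1^n h_x^{(r)}/x^r dx`. -/
noncomputable def zseq (r : ℝ) (n : ℕ) : ℝ :=
  ∑ k ∈ Finset.Icc 1 (n - 1), hyp r k / (k : ℝ) ^ r - ∫ x in (1:ℝ)..(n:ℝ), hyp r x / x ^ r

/-- `b_n(r) = ∑_{k=1}^n h_k^{(r)}/k^{r̄} − ∫_1^n h_x^{(r)}/x^{r̄} dx`. -/
noncomputable def bseq (r : ℝ) (n : ℕ) : ℝ :=
  ∑ k ∈ Finset.Icc 1 n, hyp r k / rise k r - ∫ x in (1:ℝ)..(n:ℝ), hyp r x / rise x r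

/-- `a_n(r) = ∑_{k=1}^{n-1} h_k^{(r)}/k^{r̄} − ∫_1^n h_x^{(r)}/x^{r̄} dx`. -/
noncomputable def aseq (r : ℝ) (n : ℕ) : ℝ :=
  ∑ k ∈ Finset.Icc 1 (n - 1), hyp r k / rise k r - ∫ x in (1:ℝ)..(n:ℝ), hyp r x / rise x r

/-!
Since `ψ(a + x) - ψ(a) = ∑ₙ x / ((a + n)(a + x + n))`, the normalized summand is
`h_x^{(s)} / x^{s̄} = φ_s(x) / Γ(s)` with `φ_s(x) = ∑ₙ 1 / ((s + n)(s + x + n))`.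
Splitting off the first term of `φ_r` and using `Γ(r + 1) = r Γ(r)`, the difference of the
summands for `r` and `r + 1` is `((1 - 1/r) φ_r(x) + 1 / (r²(r + x))) / Γ(r)`, which is antitone
in `x` once `r ≥ 1`. For an antitone function the sum over `k = 1, …, n - 1` dominates the integral
over `[1, n]`, hence `a_n(r + 1) ≤ a_n(r)` for every `n ≥ 1`.
-/

lemma differentiableAt_Gamma_of_pos {x : ℝ} (hx : 0 < x) : DifferentiableAt ℝ Real.Gamma x :=
  Real.differentiableAt_Gamma fun m => (hx.trans_le' (by simp)).ne'

lemma differentiableAt_log_Gamma_of_pos {x : ℝ} (hx : 0 < x) :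
    DifferentiableAt ℝ (fun y => Real.log (Real.Gamma y)) x :=
  (differentiableAt_Gamma_of_pos hx).log (Real.Gamma_pos_of_pos hx).ne'

lemma digamma_eq_deriv_log_Gamma {x : ℝ} (hx : 0 < x) :
    digamma x = deriv (fun y => Real.log (Real.Gamma y)) x := by
  rw [deriv.log (differentiableAt_Gamma_of_pos hx) (Real.Gamma_pos_of_pos hx).ne']
  rfl

lemma digamma_monotoneOn : MonotoneOn digamma (Set.Ioi 0) := by
  intro u hu v hv huv
  rw [digamma_eq_deriv_log_Gamma hu, digamma_eq_deriv_log_Gamma hv]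
  exact Real.convexOn_log_Gamma.monotoneOn_deriv
    (fun t ht => differentiableAt_log_Gamma_of_pos ht) hu hv huv

lemma digamma_add_one {x : ℝ} (hx : 0 < x) : digamma (x + 1) = digamma x + x⁻¹ := by
  rw [digamma_eq_deriv_log_Gamma (by linarith), digamma_eq_deriv_log_Gamma hx,
    ← deriv_comp_add_const, ← Real.deriv_log x,
    ← deriv_add (differentiableAt_log_Gamma_of_pos hx) (Real.differentiableAt_log hx.ne')]
  refine Filter.EventuallyEq.deriv_eq ?_
  filter_upwards [eventually_gt_nhds hx] with y hy
  rw [Real.Gamma_add_one hy.ne', Real.log_mul hy.ne' (Real.Gamma_pos_of_pos hy).ne', add_comm]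
  rfl

lemma digamma_add_nat {x : ℝ} (hx : 0 < x) (n : ℕ) :
    digamma (x + n) = digamma x + ∑ k ∈ Finset.range n, (x + k)⁻¹ := by
  induction n with
  | zero => simp
  | succ n ih =>
    rw [Nat.cast_succ, ← add_assoc, digamma_add_one (by positivity), ih,
      Finset.sum_range_succ, add_assoc]

lemma digamma_add_nat_sub_le {x : ℝ} (hx : 0 < x) (n : ℕ) :
    digamma (x + n) - digamma x ≤ n / x := by
  rw [digamma_add_nat hx, add_sub_cancel_left, div_eq_mul_inv]
  calc ∑ k ∈ Finset.range n, (x + k)⁻¹ ≤ ∑ _k ∈ Finset.range n, x⁻¹ :=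
        Finset.sum_le_sum fun k _ => inv_anti₀ hx (by simp)
    _ = n * x⁻¹ := by simp

lemma tendsto_digamma_add_nat_sub {a x : ℝ} (ha : 0 < a) (hx : 0 ≤ x) :
    Tendsto (fun m : ℕ => digamma (a + x + m) - digamma (a + m)) atTop (𝓝 0) := by
  have ham (m : ℕ) : 0 < a + m := by positivity
  refine squeeze_zero (g := fun m : ℕ => (⌈x⌉₊ : ℝ) / (a + m)) (fun m => sub_nonneg.mpr ?_)
    (fun m => ?_)
    (tendsto_const_nhds.div_atTop (tendsto_atTop_add_const_left _ a tendsto_natCast_atTop_atTop))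
  · exact digamma_monotoneOn (ham m) (by positivity : 0 < a + x + m) (by linarith)
  · calc digamma (a + x + m) - digamma (a + m) ≤ digamma (a + m + ⌈x⌉₊) - digamma (a + m) := by
          gcongr
          exact digamma_monotoneOn (by positivity : 0 < a + x + m)
            (by positivity : 0 < a + m + ⌈x⌉₊) (by linarith [Nat.le_ceil x])
      _ ≤ ⌈x⌉₊ / (a + m) := digamma_add_nat_sub_le (ham m) _

/-- `digammaSlope a x = (ψ(a + x) - ψ(a)) / x`, see `digamma_add_sub_digamma`. -/
noncomputable def digammaSlope (a x : ℝ) : ℝ := ∑' n : ℕ, ((a + n) * (a + x + n))⁻¹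

lemma summable_digammaSlope {a x : ℝ} (ha : 0 < a) (hx : 0 ≤ x) :
    Summable fun n : ℕ => ((a + n) * (a + x + n))⁻¹ := by
  have hsq : Summable fun n : ℕ => 1 / |n + a| ^ (2 : ℝ) :=
    (Real.summable_one_div_nat_add_rpow a 2).mpr one_lt_two
  refine hsq.of_nonneg_of_le (fun n => by positivity) (fun n => ?_)
  rw [abs_of_pos (by positivity), Real.rpow_two, one_div, sq, add_comm (n : ℝ)]
  gcongr
  linarith

lemma digammaSlope_antitoneOn {a : ℝ} (ha : 0 < a) : AntitoneOn (digammaSlope a) (Set.Ici 0) :=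
  fun x (hx : 0 ≤ x) y (hy : 0 ≤ y) hxy => (summable_digammaSlope ha hy).tsum_le_tsum
    (fun n => by gcongr) (summable_digammaSlope ha hx)

lemma digammaSlope_eq_inv_add {a x : ℝ} (ha : 0 < a) (hx : 0 ≤ x) :
    digammaSlope a x = (a * (a + x))⁻¹ + digammaSlope (a + 1) x := by
  rw [digammaSlope, (summable_digammaSlope ha hx).tsum_eq_zero_add, digammaSlope]
  congr 1
  · simp
  · exact tsum_congr fun n => by push_cast; ring_nf

lemma digamma_add_sub_digamma {a x : ℝ} (ha : 0 < a) (hx : 0 ≤ x) :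
    digamma (a + x) - digamma a = x * digammaSlope a x := by
  have hterm (n : ℕ) : (a + n)⁻¹ - (a + x + n)⁻¹ = x * ((a + n) * (a + x + n))⁻¹ := by
    field_simp
    ring
  have hpartial (m : ℕ) : ∑ k ∈ Finset.range m, ((a + k)⁻¹ - (a + x + k)⁻¹)
      = (digamma (a + x) - digamma a) - (digamma (a + x + m) - digamma (a + m)) := by
    rw [Finset.sum_sub_distrib, digamma_add_nat ha, digamma_add_nat (by positivity)]
    ring
  have hsum : HasSum (fun n : ℕ => (a + n)⁻¹ - (a + x + n)⁻¹) (x * digammaSlope a x) := by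
    simp only [hterm]
    exact (summable_digammaSlope ha hx).hasSum.mul_left x
  have hlim := (tendsto_digamma_add_nat_sub ha hx).const_sub (digamma (a + x) - digamma a)
  rw [sub_zero] at hlim
  exact tendsto_nhds_unique (hlim.congr fun m => (hpartial m).symm) hsum.tendsto_sum_nat

lemma hyp_div_rise {s x : ℝ} (hs : 0 < s) (hx : 0 < x) :
    hyp s x / rise x s = digammaSlope s x / Real.Gamma s := by
  have hrise : rise x s ≠ 0 :=
    div_ne_zero (Real.Gamma_pos_of_pos (by positivity)).ne' (Real.Gamma_pos_of_pos hx).ne'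
  have hΓ : Real.Gamma s ≠ 0 := (Real.Gamma_pos_of_pos hs).ne'
  rw [hyp, if_neg hs.ne', add_comm x, digamma_add_sub_digamma hs hx.le]
  field_simp

lemma digammaSlope_div_Gamma_sub_succ {r x : ℝ} (hr : 0 < r) (hx : 0 ≤ x) :
    digammaSlope r x / Real.Gamma r - digammaSlope (r + 1) x / Real.Gamma (r + 1)
      = ((1 - r⁻¹) * digammaSlope r x + (r ^ 2 * (r + x))⁻¹) / Real.Gamma r := by
  have hΓ : Real.Gamma r ≠ 0 := (Real.Gamma_pos_of_pos hr).ne'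
  have hrx : r + x ≠ 0 := by positivity
  rw [Real.Gamma_add_one hr.ne', digammaSlope_eq_inv_add hr hx]
  field_simp
  ring

lemma antitoneOn_digammaSlope_div_Gamma_sub_succ {r : ℝ} (hr : 1 ≤ r) :
    AntitoneOn (fun x => digammaSlope r x / Real.Gamma r
      - digammaSlope (r + 1) x / Real.Gamma (r + 1)) (Set.Ici 0) := by
  have hr₀ : 0 < r := by linarith
  intro x (hx : 0 ≤ x) y (hy : 0 ≤ y) hxy
  simp only [digammaSlope_div_Gamma_sub_succ hr₀ hx, digammaSlope_div_Gamma_sub_succ hr₀ hy]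
  have hr' : 0 ≤ 1 - r⁻¹ := sub_nonneg.mpr (inv_le_one_of_one_le₀ hr)
  have := Real.Gamma_pos_of_pos hr₀
  gcongr
  exact digammaSlope_antitoneOn hr₀ hx hy hxy

lemma aseq_eq_sum_Ico_sub_integral {s : ℝ} (hs : 0 < s) {n : ℕ} (hn : 1 ≤ n) :
    aseq s n = ∑ k ∈ Finset.Ico 1 n, digammaSlope s k / Real.Gamma s
      - ∫ x in (1 : ℝ)..n, digammaSlope s x / Real.Gamma s := by
  have hIcc : Finset.Icc 1 (n - 1) = Finset.Ico 1 n := by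
    ext k
    simp only [Finset.mem_Icc, Finset.mem_Ico]
    omega
  rw [aseq, hIcc]
  congr 1
  · exact Finset.sum_congr rfl fun k hk =>
      hyp_div_rise hs (by simp only [Finset.mem_Ico] at hk; exact_mod_cast hk.1)
  · refine intervalIntegral.integral_congr fun x hx => hyp_div_rise hs ?_
    rw [Set.uIcc_of_le (by exact_mod_cast hn)] at hx
    linarith [hx.1]

lemma aseq_add_one_le {r : ℝ} (hr : 1 ≤ r) {n : ℕ} (hn : 1 ≤ n) :
    aseq (r + 1) n ≤ aseq r n := by
  have hn' : (1 : ℝ) ≤ n := by exact_mod_cast hn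
  have hsub : Set.uIcc (1 : ℝ) n ⊆ Set.Ici 0 := by
    rw [Set.uIcc_of_le hn']
    exact fun x hx => zero_le_one.trans hx.1
  have hint {s : ℝ} (hs : 0 < s) :
      IntervalIntegrable (fun x => digammaSlope s x / Real.Gamma s) volume 1 n :=
    ((digammaSlope_antitoneOn hs).mono hsub).intervalIntegrable.div_const _
  have hsum_ge := (antitoneOn_digammaSlope_div_Gamma_sub_succ hr).mono
    (fun x (hx : x ∈ Set.Icc ((1 : ℕ) : ℝ) n) => zero_le_one.trans (by simpa using hx.1))
    |>.integral_le_sum_Ico hn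
  rw [Nat.cast_one, intervalIntegral.integral_sub (hint (by linarith)) (hint (by linarith)),
    Finset.sum_sub_distrib] at hsum_ge
  rw [aseq_eq_sum_Ico_sub_integral (by linarith) hn,
    aseq_eq_sum_Ico_sub_integral (by linarith) hn]
  linarith

theorem gammabar_antitone (r : ℝ) (hr : 1 ≤ r) (γ₁ γ₂ : ℝ)
    (h₁ : Tendsto (aseq r) atTop (𝓝 γ₁))
    (h₂ : Tendsto (aseq (r + 1)) atTop (𝓝 γ₂)) :
    γ₂ ≤ γ₁ :=
  le_of_tendsto_of_tendsto h₂ h₁ (eventually_atTop.mpr ⟨1, fun _ hn => aseq_add_one_le hr hn⟩)
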